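/- Let $K$ be a totally real number field with $[K : \mathbb{Q}] \geq 2$, let $R \subseteq \mathcal{O}_K$ be a subring of finite additive index in $\mathcal{O}_K$, and let $n \geq 2$ be an integer. Then there exist elements $f, g \in R$ with $g \neq 0$ such that both $f - g$ and $f + (n-1)g$ lie in $R \cap \mathcal{O}_K^\times$, i.e., they are elements of $R$ that are units of $\mathcal{O}_K$. -/

import Mathlib

/-!
A totally real field of degree at least `2` has at least two infinite places, so Dirichlet's unit
theorem provides a unit `u` of infinite order. Let `k = n - 1`, `m = [𝓞 K : R]` and
`N = (k + 1) m`. Since `(𝓞 K ⧸ N)ˣ` is finite, some power `w ≠ 1` of `u` satisfies `w = 1 + N x`.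
Then `g = m x` and `f = 1 + g` lie in `R`, `f - g = 1` and `f + k g = w`.
-/

open NumberField

theorem NumberField.isTotallyReal_of_forall_isReal {K : Type*} [Field K]
    (h : ∀ φ : K →+* ℂ, ComplexEmbedding.IsReal φ) : IsTotallyReal K :=
  ⟨fun _ ↦ InfinitePlace.isReal_iff.mpr (h _)⟩

namespace NumberField

variable (K : Type*) [Field K] [NumberField K]

theorem IsTotallyReal.card_infinitePlace [IsTotallyReal K] :
    Fintype.card (InfinitePlace K) = Module.finrank ℚ K := by
  rw [IsTotallyReal.finrank, InfinitePlace.card_eq_nrRealPlaces_add_nrComplexPlaces,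
    IsTotallyReal.nrComplexPlaces_eq_zero, add_zero]

theorem Units.exists_not_isOfFinOrder (h : 1 < Fintype.card (InfinitePlace K)) :
    ∃ u : (𝓞 K)ˣ, ¬IsOfFinOrder u := by
  obtain ⟨w₁, w₂, hne⟩ := Fintype.exists_pair_of_one_lt_card h
  obtain ⟨u, hu⟩ := Units.dirichletUnitTheorem.exists_unit K w₁
  refine ⟨u, fun hfin ↦ (hu w₂ hne.symm).ne ?_⟩
  rw [(Units.mem_torsion K).mp ((CommGroup.mem_torsion _).mpr hfin) w₂, Real.log_one]

end NumberField

theorem Units.exists_ne_one_sub_one_mem_of_not_isOfFinOrder {A : Type*} [CommRing A]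
    (I : Ideal A) [Finite (A ⧸ I)] {u : Aˣ} (hu : ¬IsOfFinOrder u) :
    ∃ w : Aˣ, w ≠ 1 ∧ (w : A) - 1 ∈ I := by
  set k := orderOf (Units.map (Ideal.Quotient.mk I : A →* A ⧸ I) u)
  have hk : 0 < k := orderOf_pos _
  refine ⟨u ^ k, fun h ↦ hu (isOfFinOrder_iff_pow_eq_one.mpr ⟨k, hk, h⟩), ?_⟩
  rw [← Ideal.Quotient.eq, map_one]
  exact congrArg Units.val (pow_orderOf_eq_one (Units.map (Ideal.Quotient.mk I : A →* A ⧸ I) u))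

theorem Units.exists_ne_one_dvd_sub_one_of_not_isOfFinOrder {S : Type*} [CommRing S] [IsDomain S]
    [Module.Free ℤ S] [Module.Finite ℤ S] {u : Sˣ} (hu : ¬IsOfFinOrder u) {N : S} (hN : N ≠ 0) :
    ∃ w : Sˣ, w ≠ 1 ∧ N ∣ (w : S) - 1 := by
  have := Ideal.finiteQuotientOfFreeOfNeBot (Ideal.span {N}) (by simpa using hN)
  simpa only [Ideal.mem_span_singleton] using
    Units.exists_ne_one_sub_one_mem_of_not_isOfFinOrder (Ideal.span {N}) hu

theorem exists_f_g_in_subring_units_of_totallyReal_general (K : Type*) [Field K] [NumberField K]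
    (htr : ∀ φ : K →+* ℂ, NumberField.ComplexEmbedding.IsReal φ)
    (hd : 2 ≤ Module.finrank ℚ K) (R : Subring (𝓞 K)) (hfin : R.toAddSubgroup.index ≠ 0)
    (n : ℕ) :
    ∃ f g : R, g ≠ 0 ∧ IsUnit ((f : 𝓞 K) - (g : 𝓞 K)) ∧
      IsUnit ((f : 𝓞 K) + ((n - 1 : ℕ) : 𝓞 K) * (g : 𝓞 K)) := by
  have := isTotallyReal_of_forall_isReal htr
  obtain ⟨u, hu⟩ :=
    Units.exists_not_isOfFinOrder K (by rw [IsTotallyReal.card_infinitePlace]; omega)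
  set m := R.toAddSubgroup.index
  obtain ⟨w, hw, x, hx⟩ := Units.exists_ne_one_dvd_sub_one_of_not_isOfFinOrder hu
    (N := ((n - 1 + 1) * m : ℕ)) (by exact_mod_cast (by positivity : (n - 1 + 1) * m ≠ 0))
  push_cast at hx
  have hg : (m : 𝓞 K) * x ∈ R := by simpa using AddSubgroup.nsmul_index_mem R.toAddSubgroup x
  refine ⟨⟨1 + m * x, R.add_mem R.one_mem hg⟩, ⟨m * x, hg⟩, fun h0 ↦ hw ?_, ?_, ?_⟩
  · have h0 : (m : 𝓞 K) * x = 0 := congrArg Subtype.val h0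
    refine Units.val_eq_one.mp ?_
    linear_combination hx + ((n - 1 : ℕ) + 1 : 𝓞 K) * h0
  · simp
  · convert w.isUnit using 1
    linear_combination -hx

/-- Let `R` be a subring of finite additive index in the ring of integers of a totally real
number field `K` of degree at least `2`, and `n ≥ 2`. Then there are `f, g ∈ R` with `g ≠ 0`
such that `f - g` and `f + (n - 1) g` are elements of `R` that are units of `𝓞 K`. -/
theorem exists_f_g_in_subring_units_of_totallyReal (K : Type*) [Field K] [NumberField K]
    (htr : ∀ φ : K →+* ℂ, NumberField.ComplexEmbedding.IsReal φ)
    (hd : 2 ≤ Module.finrank ℚ K) (R : Subring (𝓞 K)) (hfin : R.toAddSubgroup.index ≠ 0)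
    (n : ℕ) (hn : 2 ≤ n) :
    ∃ f g : R, g ≠ 0 ∧ IsUnit ((f : 𝓞 K) - (g : 𝓞 K)) ∧
      IsUnit ((f : 𝓞 K) + ((n - 1 : ℕ) : 𝓞 K) * (g : 𝓞 K)) :=
  exists_f_g_in_subring_units_of_totallyReal_general K htr hd R hfin n
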